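/- arXiv:2308.02889 — 4 statements merged into one kernel-verified Lean document; each statement's English description precedes it below -/
import Mathlib

section
/- Let C be the primitive Reed–Solomon [n, k] code over F_q with q = 2^{2t}, n = q − 1, k = n/3, defined by the check polynomial p(x) = (x−1)(x−ω)⋯(x−ω^{k−1}) for ω a primitive element of F_q. Define a ∈ F_q^{n×n×n} by a(x,y,z) := a'(x, ω^{−k} y, ω^{−2k} z) where a'(x,y,z) = Σ_{i+j+l ≡ 0 mod n} x^i y^j z^l. Then a is a codeword of C ⊞ C ⊞ C, i.e., a(x,y,z)·p(x)·p(y)·p(z) ≡ 0 mod (x^n−1, y^n−1, z^n−1). -/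
noncomputable section

open Polynomial

/-- Normalized Hamming weight. -/
def normWt {ι F : Type*} [Fintype ι] [Zero F] (x : ι → F) : ℝ :=
  (Nat.card {p : ι // x p ≠ 0} : ℝ) / (Fintype.card ι : ℝ)

/-- Normalized Hamming distance from a word to a set of words. -/
def distTo {ι F : Type*} [Fintype ι] [AddGroup F] (x : ι → F) (S : Set (ι → F)) : ℝ :=
  sInf ((fun c => normWt (x - c)) '' S)

/-- Normalized minimum distance of a code. -/
def minDist {ι F : Type*} [Fintype ι] [Zero F] (S : Set (ι → F)) : ℝ :=
  sInf (normWt '' (S \ {0}))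

/-- Restriction of a word on a grid to the axis-`i` line through `y`. -/
def lineRestrict {F : Type*} {m : ℕ} {n : Fin m → ℕ}
    (x : (∀ j, Fin (n j)) → F) (i : Fin m) (y : ∀ j, Fin (n j)) : Fin (n i) → F :=
  fun s => x (Function.update y i s)

/-- `‖x‖_i`: the fraction of axis-`i` parallel lines on which `x` is nonzero. -/
def lineWt {F : Type*} [Zero F] {m : ℕ} {n : Fin m → ℕ}
    (x : (∀ j, Fin (n j)) → F) (i : Fin m) : ℝ :=
  (Nat.card {y : ∀ j, Fin (n j) // lineRestrict x i y ≠ 0} : ℝ) /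
    (Fintype.card (∀ j, Fin (n j)) : ℝ)

/-- `C^{(i)}`: words all of whose axis-`i` lines belong to `C i`. -/
def axisCode {F : Type*} {m : ℕ} {n : Fin m → ℕ}
    (C : ∀ i, Set (Fin (n i) → F)) (i : Fin m) : Set ((∀ j, Fin (n j)) → F) :=
  {x | ∀ y, lineRestrict x i y ∈ C i}

/-- Tensor product code `C₁ ⊗ ⋯ ⊗ C_m`. -/
def prodCode {F : Type*} {m : ℕ} {n : Fin m → ℕ}
    (C : ∀ i, Set (Fin (n i) → F)) : Set ((∀ j, Fin (n j)) → F) :=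
  ⋂ i, axisCode C i

/-- Dual code w.r.t. the standard bilinear form. -/
def dualCode {ι F : Type*} [Fintype ι] [CommRing F] (S : Set (ι → F)) : Set (ι → F) :=
  {x | ∀ c ∈ S, ∑ p, x p * c p = 0}

/-- `C₁ ⊞ ⋯ ⊞ C_m := (C₁^⊥ ⊗ ⋯ ⊗ C_m^⊥)^⊥`. -/
def boxCode {F : Type*} [CommRing F] {m : ℕ} {n : Fin m → ℕ}
    (C : ∀ i, Set (Fin (n i) → F)) : Set ((∀ j, Fin (n j)) → F) :=
  dualCode (prodCode (fun i => dualCode (C i)))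

/-- `ρ`-product-expansion of a collection of codes. -/
def productExpanding {F : Type*} [Field F] {m : ℕ} {n : Fin m → ℕ}
    (C : ∀ i, Set (Fin (n i) → F)) (ρ : ℝ) : Prop :=
  ∀ c ∈ boxCode C, ∃ a : Fin m → ((∀ j, Fin (n j)) → F),
    (∀ i, a i ∈ axisCode C i) ∧ c = ∑ i, a i ∧
      ρ * ∑ i, lineWt (a i) i ≤ normWt c

/-- The product-expansion constant `ρ(𝒞)`. -/
def prodExpConst {F : Type*} [Field F] {m : ℕ} {n : Fin m → ℕ}
    (C : ∀ i, Set (Fin (n i) → F)) : ℝ :=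
  sSup {ρ : ℝ | productExpanding C ρ}

/-- Expected distance under the axis-parallel line test `T_m^1`. -/
def lineTestE {F : Type*} [Field F] {m : ℕ} {n : Fin m → ℕ}
    (C : ∀ i, Set (Fin (n i) → F)) (x : (∀ j, Fin (n j)) → F) : ℝ :=
  (∑ i, (∑ y : ∀ j, Fin (n j), distTo (lineRestrict x i y) (C i)) /
      (Fintype.card (∀ j, Fin (n j)) : ℝ)) / (m : ℝ)

/-- Robustness constant `ρ_r(T_m^1, ⊗𝒞)` of the axis-parallel line test. -/
def lineRobustConst {F : Type*} [Field F] {m : ℕ} {n : Fin m → ℕ}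
    (C : ∀ i, Set (Fin (n i) → F)) : ℝ :=
  sSup {α : ℝ | ∀ x, α * distTo x (prodCode C) ≤ lineTestE C x}

/-- Agreement-testability constant `ρ_a(⊗𝒞)`. -/
def agreeConst {F : Type*} [Field F] {m : ℕ} {n : Fin m → ℕ}
    (C : ∀ i, Set (Fin (n i) → F)) : ℝ :=
  sSup {α : ℝ | ∀ c : Fin m → ((∀ j, Fin (n j)) → F),
    (∀ i, c i ∈ axisCode C i) → ∃ z ∈ prodCode C,
      α * ((∑ i, lineWt (c i - z) i) / (m : ℝ)) ≤
        (∑ i, ∑ j, normWt (c i - c j)) / ((m : ℝ) ^ 2)}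

/-- `C^{⊗k}` on the grid `[n]^k`. -/
def tensorPow {F : Type*} {n : ℕ} (C : Set (Fin n → F)) (k : ℕ) :
    Set ((Fin k → Fin n) → F) :=
  {x | ∀ (i : Fin k) (y : Fin k → Fin n), (fun s => x (Function.update y i s)) ∈ C}

/-- Restriction of a word to the axis-parallel `k`-flat determined by the axes
`e : Fin k ↪ Fin m` and base point `y`. -/
def flatRestrict {F : Type*} {n m k : ℕ} (x : (Fin m → Fin n) → F)
    (e : Fin k ↪ Fin m) (y : Fin m → Fin n) : (Fin k → Fin n) → F :=
  fun z => x (fun j => if h : ∃ l, e l = j then z h.choose else y j)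

/-- Expected distance under the axis-parallel `k`-flat test `T_m^k` for `C^{⊗m}`. -/
def flatTestE {F : Type*} [Field F] {n : ℕ} (C : Set (Fin n → F)) (m k : ℕ)
    (x : (Fin m → Fin n) → F) : ℝ :=
  (∑ e : Fin k ↪ Fin m, ∑ y : Fin m → Fin n,
      distTo (flatRestrict x e y) (tensorPow C k)) /
    ((Fintype.card (Fin k ↪ Fin m) : ℝ) * (Fintype.card (Fin m → Fin n) : ℝ))

/-- Robustness constant `ρ_r(T_m^k, C^{⊗m})`. -/
def flatRobustConst {F : Type*} [Field F] {n : ℕ} (C : Set (Fin n → F)) (m k : ℕ) : ℝ :=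
  sSup {α : ℝ | ∀ x : (Fin m → Fin n) → F,
    α * distTo x (tensorPow C m) ≤ flatTestE C m k x}

/-- The polynomial `Σ aᵢ xⁱ` of a word of length `n`. -/
def wordPoly {F : Type*} [CommSemiring F] {n : ℕ} (a : Fin n → F) : Polynomial F :=
  ∑ i, Polynomial.C (a i) * Polynomial.X ^ (i : ℕ)

/-- The cyclic code of length `n` with check polynomial `p`. -/
def cyclicCode {F : Type*} [CommRing F] (n : ℕ) (p : Polynomial F) : Set (Fin n → F) :=
  {a | (Polynomial.X ^ n - 1) ∣ p * wordPoly a}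

/-- Check polynomial `(x-1)(x-ω)⋯(x-ω^{k-1})` of the primitive Reed–Solomon code. -/
def rsCheck {F : Type*} [CommRing F] (k : ℕ) (ω : F) : Polynomial F :=
  ∏ i ∈ Finset.range k, (Polynomial.X - Polynomial.C (ω ^ i))

/-- The primitive Reed–Solomon evaluation code of degree `< k` at the nonzero points. -/
def evalRS (F : Type*) [Field F] [Fintype F] (k : ℕ) : Set (Fˣ → F) :=
  {c | ∃ p : Polynomial F, p.degree < (k : ℕ) ∧ ∀ a : Fˣ, c a = p.eval (a : F)}

/-- Words on `ι₁ × ι₂` all of whose columns lie in `S`. -/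
def colCode {ι₁ ι₂ F : Type*} (S : Set (ι₁ → F)) : Set (ι₁ × ι₂ → F) :=
  {x | ∀ j, (fun i => x (i, j)) ∈ S}

/-- Words on `ι₁ × ι₂` all of whose rows lie in `S`. -/
def rowCode {ι₁ ι₂ F : Type*} (S : Set (ι₂ → F)) : Set (ι₁ × ι₂ → F) :=
  {x | ∀ i, (fun j => x (i, j)) ∈ S}

/-- The multivariate polynomial `Σ_y x_y ∏ᵢ Xᵢ^{yᵢ}` of a word on the grid `[n]^m`. -/
def wordPolyMv {F : Type*} [CommSemiring F] {m n : ℕ} (x : (Fin m → Fin n) → F) :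
    MvPolynomial (Fin m) F :=
  ∑ y : Fin m → Fin n, MvPolynomial.C (x y) * ∏ i, MvPolynomial.X i ^ ((y i : ℕ))

/-!
Put `v = ω⁻¹`, `Y = v ^ k • y` and `Z = v ^ (2k) • z`. Modulo `x ^ n - 1, y ^ n - 1, z ^ n - 1`
the word is `D = ∑_{i + j + l ≡ 0} x ^ i Y ^ j Z ^ l`, and multiplying it by any of `x`, `Y`, `Z`
raises the level `i + j + l` by one, so `x D = Y D = Z D`. Transporting the check polynomial `p`
along these relations gives `p(x) p(y) p(z) D = p(v ^ (2k) z) p(v ^ k z) p(z) D`. The three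
rescaled check polynomials vanish on the three blocks `ω ^ [2k, 3k)`, `ω ^ [k, 2k)`, `ω ^ [0, k)`
of `n`-th roots of unity, so their product is `z ^ n - 1 = 0`.
-/

open Finset

lemma pow_val_add_one_of_pow_eq_one {M : Type*} [Monoid M] {n : ℕ} [NeZero n] {x : M}
    (hx : x ^ n = 1) (i : Fin n) : x ^ ((i + 1 : Fin n) : ℕ) = x ^ (i : ℕ) * x := by
  rw [Fin.val_add, ← pow_eq_pow_mod _ hx, pow_add, Fin.val_one', ← pow_eq_pow_mod _ hx, pow_one]

section DiagSum

variable {R : Type*} [CommRing R] {n : ℕ}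

def diagSum (x y z : R) (c : Fin n) : R :=
  ∑ i : Fin n, ∑ j : Fin n, ∑ l : Fin n,
    if i + j + l = c then x ^ (i : ℕ) * y ^ (j : ℕ) * z ^ (l : ℕ) else 0

lemma diagSum_comm_left (x y z : R) (c : Fin n) : diagSum x y z c = diagSum y x z c := by
  rw [diagSum, sum_comm]
  refine sum_congr rfl fun j _ => sum_congr rfl fun i _ => sum_congr rfl fun l _ => ?_
  rw [add_comm i j, mul_comm (x ^ _)]

lemma diagSum_comm_right (x y z : R) (c : Fin n) : diagSum x y z c = diagSum x z y c := by
  refine sum_congr rfl fun i _ => ?_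
  rw [sum_comm]
  refine sum_congr rfl fun l _ => sum_congr rfl fun j _ => ?_
  rw [add_right_comm, mul_right_comm]

lemma map_diagSum {S G : Type*} [CommRing S] [FunLike G R S] [RingHomClass G R S] (f : G)
    (x y z : R) (c : Fin n) : f (diagSum x y z c) = diagSum (f x) (f y) (f z) c := by
  simp only [diagSum, map_sum, apply_ite f, map_mul, map_pow, map_zero]

variable [NeZero n] {x y z : R}

lemma mul_diagSum_of_pow_left (hx : x ^ n = 1) (c : Fin n) :
    x * diagSum x y z c = diagSum x y z (c + 1) := by
  simp only [diagSum, mul_sum, mul_ite, mul_zero]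
  refine Fintype.sum_equiv (Equiv.addRight 1) _ _ fun i => ?_
  refine sum_congr rfl fun j _ => sum_congr rfl fun l _ => ?_
  have hshift : i + 1 + j + l = c + 1 ↔ i + j + l = c := by
    rw [add_right_comm i 1 j, add_right_comm (i + j) 1 l, add_left_inj]
  simp only [Equiv.coe_addRight, hshift, pow_val_add_one_of_pow_eq_one hx, mul_comm _ x, mul_assoc]

lemma mul_diagSum_of_pow_mid (hy : y ^ n = 1) (c : Fin n) :
    y * diagSum x y z c = diagSum x y z (c + 1) := by
  rw [diagSum_comm_left, mul_diagSum_of_pow_left hy, diagSum_comm_left]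

lemma mul_diagSum_of_pow_right (hz : z ^ n = 1) (c : Fin n) :
    z * diagSum x y z c = diagSum x y z (c + 1) := by
  rw [diagSum_comm_right, mul_diagSum_of_pow_mid hz, diagSum_comm_right]

end DiagSum

lemma aeval_mul_eq_of_mul_eq {F R : Type*} [CommRing F] [CommRing R] [Algebra F R]
    {x z a : R} (h : x * a = z * a) (p : F[X]) : aeval x p * a = aeval z p * a := by
  obtain ⟨q, hq⟩ := sub_dvd_eval_sub x z (p.map (algebraMap F R))
  rw [eval_map_algebraMap, eval_map_algebraMap] at hq
  linear_combination a * hq + q * h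

section ReedSolomon

variable {F : Type*} [Field F] {k : ℕ} {w : F}

lemma rsCheck_comp_C_mul_X (hw : w ≠ 0) (m : ℕ) :
    (rsCheck k w).comp (C (w⁻¹ ^ m) * X) =
      C (w⁻¹ ^ m) ^ k * ∏ i ∈ range k, (X - C (w ^ (m + i))) := by
  have hfactor : ∀ i ∈ range k, (X - C (w ^ i)).comp (C (w⁻¹ ^ m) * X) =
      C (w⁻¹ ^ m) * (X - C (w ^ (m + i))) := fun i _ => by
    rw [sub_comp, X_comp, C_comp, mul_sub, ← C_mul, pow_add, ← mul_assoc, ← mul_pow,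
      inv_mul_cancel₀ hw, one_pow, one_mul]
  rw [rsCheck, Polynomial.prod_comp, prod_congr rfl hfactor, prod_mul_distrib, prod_const,
    card_range]

lemma rsCheck_comp_mul_rsCheck_comp_mul_rsCheck [NeZero k] (hw : IsPrimitiveRoot w (3 * k)) :
    (rsCheck k w).comp (C (w⁻¹ ^ (2 * k)) * X) * (rsCheck k w).comp (C (w⁻¹ ^ k) * X) *
      rsCheck k w = X ^ (3 * k) - 1 := by
  have hw0 : w ≠ 0 := hw.ne_zero (NeZero.ne _)
  have hsplit : (X ^ (3 * k) - 1 : F[X]) = ∏ i ∈ range (3 * k), (X - C (w ^ i)) := by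
    simpa using X_pow_sub_C_eq_prod hw (Nat.pos_of_neZero _) (one_pow _)
  have hscalar : C (w⁻¹ ^ (2 * k)) ^ k * C (w⁻¹ ^ k) ^ k = (1 : F[X]) := by
    rw [← C_pow, ← C_pow, ← C_mul, ← pow_mul, ← pow_mul, ← pow_add,
      show 2 * k * k + k * k = 3 * k * k by ring, pow_mul, inv_pow, hw.pow_eq_one, inv_one,
      one_pow, C_1]
  have hblocks : ∏ i ∈ range (3 * k), (X - C (w ^ i)) = (∏ i ∈ range k, (X - C (w ^ i))) *
      (∏ i ∈ range k, (X - C (w ^ (k + i)))) * ∏ i ∈ range k, (X - C (w ^ (2 * k + i))) := by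
    rw [show 3 * k = k + k + k by ring, prod_range_add, prod_range_add, two_mul]
  rw [rsCheck_comp_C_mul_X hw0, rsCheck_comp_C_mul_X hw0, hsplit, hblocks, rsCheck]
  linear_combination (∏ i ∈ range k, (X - C (w ^ i))) *
    (∏ i ∈ range k, (X - C (w ^ (k + i)))) * (∏ i ∈ range k, (X - C (w ^ (2 * k + i)))) *
    hscalar

variable {R : Type*} [CommRing R] [Algebra F R]

lemma aeval_smul_eq_aeval_comp (c : F) (z : R) (p : F[X]) :
    aeval (c • z) p = aeval z (p.comp (C c * X)) := by
  rw [aeval_comp, map_mul, aeval_C, aeval_X, Algebra.smul_def]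

theorem diagSum_mul_aeval_rsCheck_eq_zero [NeZero k] (hw : IsPrimitiveRoot w (3 * k))
    {x y z : R} (hx : x ^ (3 * k) = 1) (hy : y ^ (3 * k) = 1) (hz : z ^ (3 * k) = 1) :
    diagSum x (w⁻¹ ^ k • y) (w⁻¹ ^ (2 * k) • z) (0 : Fin (3 * k)) * aeval x (rsCheck k w) *
      aeval y (rsCheck k w) * aeval z (rsCheck k w) = 0 := by
  have hw0 : w ≠ 0 := hw.ne_zero (NeZero.ne _)
  have hroot : ∀ m (u : R), u ^ (3 * k) = 1 → (w⁻¹ ^ m • u) ^ (3 * k) = 1 := fun m u hu => by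
    rw [_root_.smul_pow, hu, ← pow_mul, mul_comm, pow_mul, inv_pow, hw.pow_eq_one, inv_one,
      one_pow, one_smul]
  set D := diagSum x (w⁻¹ ^ k • y) (w⁻¹ ^ (2 * k) • z) (0 : Fin (3 * k))
  have hzD := mul_diagSum_of_pow_right (hroot (2 * k) z hz) (x := x) (y := w⁻¹ ^ k • y)
    (0 : Fin (3 * k))
  have hxD : x * D = (w⁻¹ ^ (2 * k) • z) * D := (mul_diagSum_of_pow_left hx 0).trans hzD.symm
  have hyD : y * D = (w⁻¹ ^ k • z) * D :=
    calc y * D = w ^ k • ((w⁻¹ ^ k • y) * D) := by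
          rw [smul_mul_assoc, smul_smul, ← mul_pow, mul_inv_cancel₀ hw0, one_pow, one_smul]
      _ = w ^ k • ((w⁻¹ ^ (2 * k) • z) * D) := by
          rw [mul_diagSum_of_pow_mid (hroot k y hy), hzD]
      _ = (w⁻¹ ^ k • z) * D := by
          rw [← smul_mul_assoc, smul_smul, two_mul, pow_add, ← mul_assoc, ← mul_pow,
            mul_inv_cancel₀ hw0, one_pow, one_mul]
  have hvanish : aeval (w⁻¹ ^ (2 * k) • z) (rsCheck k w) * aeval (w⁻¹ ^ k • z) (rsCheck k w) *
      aeval z (rsCheck k w) = 0 := by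
    rw [aeval_smul_eq_aeval_comp, aeval_smul_eq_aeval_comp, ← map_mul, ← map_mul,
      rsCheck_comp_mul_rsCheck_comp_mul_rsCheck hw, map_sub, map_pow, aeval_X, map_one, hz,
      sub_self]
  linear_combination (aeval y (rsCheck k w) * aeval z (rsCheck k w)) *
      aeval_mul_eq_of_mul_eq hxD (rsCheck k w) +
    (aeval (w⁻¹ ^ (2 * k) • z) (rsCheck k w) * aeval z (rsCheck k w)) *
      aeval_mul_eq_of_mul_eq hyD (rsCheck k w) + D * hvanish

end ReedSolomon

lemma sum_ite_mod_eq_diagSum {F : Type*} [Field F] {n : ℕ} [NeZero n] (v : F) (k : ℕ) :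
    (∑ i : Fin n, ∑ j : Fin n, ∑ l : Fin n,
        if ((i : ℕ) + (j : ℕ) + (l : ℕ)) % n = 0 then
          MvPolynomial.C (v ^ (k * (j : ℕ)) * v ^ (2 * k * (l : ℕ))) *
            (MvPolynomial.X (0 : Fin 3) ^ (i : ℕ) * MvPolynomial.X 1 ^ (j : ℕ) *
              MvPolynomial.X 2 ^ (l : ℕ))
        else 0) =
      diagSum (MvPolynomial.X 0) (v ^ k • MvPolynomial.X 1) (v ^ (2 * k) • MvPolynomial.X 2)
        (0 : Fin n) := by
  refine sum_congr rfl fun i _ => sum_congr rfl fun j _ => sum_congr rfl fun l _ => ?_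
  refine if_congr ?_ ?_ rfl
  · rw [Fin.ext_iff, Fin.val_add, Fin.val_add, Nat.mod_add_mod, Fin.val_zero]
  · rw [_root_.smul_pow, _root_.smul_pow, MvPolynomial.smul_eq_C_mul,
      MvPolynomial.smul_eq_C_mul, pow_mul, pow_mul, MvPolynomial.C_mul]
    ring

theorem stmt_3_general {F : Type*} [Field F] [Fintype F] (n k : ℕ)
    (hn : n = Fintype.card F - 1) (hk : n = 3 * k)
    (ω : Fˣ) (hω : ∀ u : Fˣ, u ∈ Subgroup.zpowers ω) :
    (∑ i : Fin n, ∑ j : Fin n, ∑ l : Fin n,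
        if ((i : ℕ) + (j : ℕ) + (l : ℕ)) % n = 0 then
          MvPolynomial.C (((ω⁻¹ : Fˣ) : F) ^ (k * (j : ℕ)) *
              ((ω⁻¹ : Fˣ) : F) ^ (2 * k * (l : ℕ))) *
            (MvPolynomial.X (0 : Fin 3) ^ (i : ℕ) * MvPolynomial.X 1 ^ (j : ℕ) *
              MvPolynomial.X 2 ^ (l : ℕ))
        else 0) *
        Polynomial.aeval (MvPolynomial.X (0 : Fin 3) : MvPolynomial (Fin 3) F)
          (rsCheck k (ω : F)) *
        Polynomial.aeval (MvPolynomial.X (1 : Fin 3) : MvPolynomial (Fin 3) F)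
          (rsCheck k (ω : F)) *
        Polynomial.aeval (MvPolynomial.X (2 : Fin 3) : MvPolynomial (Fin 3) F)
          (rsCheck k (ω : F)) ∈
      Ideal.span (Set.range fun i : Fin 3 => MvPolynomial.X i ^ n - 1) := by
  rcases eq_or_ne n 0 with rfl | hn0
  · simp
  have : NeZero k := ⟨by omega⟩
  subst hk
  have hprim : IsPrimitiveRoot (ω : F) (3 * k) := by
    rw [IsPrimitiveRoot.coe_units_iff, hn, ← Nat.card_eq_fintype_card, ← Nat.card_units,
      ← orderOf_eq_card_of_forall_mem_zpowers hω]
    exact IsPrimitiveRoot.orderOf ω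
  set I := Ideal.span
    (Set.range fun i : Fin 3 => (MvPolynomial.X i : MvPolynomial (Fin 3) F) ^ (3 * k) - 1)
  have hroot : ∀ i, Ideal.Quotient.mkₐ F I (MvPolynomial.X i) ^ (3 * k) = 1 := fun i => by
    rw [← map_pow, ← sub_eq_zero, ← map_one (Ideal.Quotient.mkₐ F I), ← map_sub,
      Ideal.Quotient.mkₐ_eq_mk, Ideal.Quotient.eq_zero_iff_mem]
    exact Ideal.subset_span ⟨i, rfl⟩
  rw [← Ideal.Quotient.eq_zero_iff_mem, ← Ideal.Quotient.mkₐ_eq_mk F I, Units.val_inv_eq_inv_val,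
    sum_ite_mod_eq_diagSum, map_mul, map_mul, map_mul, map_diagSum, map_smul, map_smul,
    ← aeval_algHom_apply, ← aeval_algHom_apply, ← aeval_algHom_apply]
  exact diagSum_mul_aeval_rsCheck_eq_zero hprim (hroot 0) (hroot 1) (hroot 2)

/-- the word `a` from the paper is a codeword of `C ⊞ C ⊞ C`. -/
theorem stmt_3 {F : Type*} [Field F] [Fintype F] (t n k : ℕ) (ht : 1 ≤ t)
    (hcard : Fintype.card F = 2 ^ (2 * t)) (hn : n = Fintype.card F - 1) (hk : n = 3 * k)
    (ω : Fˣ) (hω : ∀ u : Fˣ, u ∈ Subgroup.zpowers ω) :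
    (∑ i : Fin n, ∑ j : Fin n, ∑ l : Fin n,
        if ((i : ℕ) + (j : ℕ) + (l : ℕ)) % n = 0 then
          MvPolynomial.C (((ω⁻¹ : Fˣ) : F) ^ (k * (j : ℕ)) *
              ((ω⁻¹ : Fˣ) : F) ^ (2 * k * (l : ℕ))) *
            (MvPolynomial.X (0 : Fin 3) ^ (i : ℕ) * MvPolynomial.X 1 ^ (j : ℕ) *
              MvPolynomial.X 2 ^ (l : ℕ))
        else 0) *
        Polynomial.aeval (MvPolynomial.X (0 : Fin 3) : MvPolynomial (Fin 3) F)
          (rsCheck k (ω : F)) *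
        Polynomial.aeval (MvPolynomial.X (1 : Fin 3) : MvPolynomial (Fin 3) F)
          (rsCheck k (ω : F)) *
        Polynomial.aeval (MvPolynomial.X (2 : Fin 3) : MvPolynomial (Fin 3) F)
          (rsCheck k (ω : F)) ∈
      Ideal.span (Set.range fun i : Fin 3 => MvPolynomial.X i ^ n - 1) :=
  stmt_3_general n k hn hk ω hω

end
end

section
/- Let a ∈ F_q^{[n]×[n]×[n]} be the word with a_{ijl} = nonzero exactly when i + j + l ≡ 0 (mod n) (after any fixed invertible rescaling of coordinates along axes). If a = a₁ + a₂ + a₃ where each a_i is supported so that a₁ has columns along axis 1, etc. (a_i ∈ C^{(i)} for arbitrary codes), then |a₁|₁ + |a₂|₂ + |a₃|₃ ≥ n², where |a_i|_i counts the number of axis-i-parallel lines on which a_i is nonzero. -/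
/-!
In a finite abelian group `G`, the triples of coordinate sum `0` form a set `D` of `|G|²` points,
any two coordinates of which determine the third, so `D` meets every axis-parallel line at most
once. If `x₁ + x₂ + x₃` vanishes nowhere on `D`, every `p ∈ D` has some `xᵢ p ≠ 0`, and then the
axis-`i` line through `p` is a nonzero line of `xᵢ`. This assigns distinct lines to distinct points
of `D`, hence at least `|G|²` nonzero lines. For `G = ℤ/n`, `D` is the support of the diagonal word.
-/

noncomputable section

open Polynomial

open Finset

section ZeroSumTriples

variable (G : Type*) [AddCommGroup G] [Fintype G] [DecidableEq G]

def zeroSumTriples : Finset (G × G × G) := {p | p.1 + p.2.1 + p.2.2 = 0}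

variable {G}

lemma mem_zeroSumTriples {p : G × G × G} :
    p ∈ zeroSumTriples G ↔ p.1 + p.2.1 + p.2.2 = 0 := by
  simp [zeroSumTriples]

lemma card_zeroSumTriples : #(zeroSumTriples G) = Fintype.card G ^ 2 := by
  rw [sq, ← Fintype.card_prod, ← card_univ]
  refine card_nbij' (fun p => p.2) (fun q => (-(q.1 + q.2), q)) ?_ ?_ ?_ ?_ <;>
    simp [Set.MapsTo, Set.LeftInvOn, mem_zeroSumTriples]
  grind

lemma injOn_omitFst_zeroSumTriples :
    Set.InjOn (fun p : G × G × G => (p.2.1, p.2.2)) (zeroSumTriples G) := by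
  rintro ⟨i, j, l⟩ hp ⟨i', j', l'⟩ hp' h
  simp only [mem_coe, mem_zeroSumTriples, Prod.mk.injEq] at hp hp' h ⊢
  obtain ⟨rfl, rfl⟩ := h
  exact ⟨by grind, rfl, rfl⟩

lemma injOn_omitSnd_zeroSumTriples :
    Set.InjOn (fun p : G × G × G => (p.1, p.2.2)) (zeroSumTriples G) := by
  rintro ⟨i, j, l⟩ hp ⟨i', j', l'⟩ hp' h
  simp only [mem_coe, mem_zeroSumTriples, Prod.mk.injEq] at hp hp' h ⊢
  obtain ⟨rfl, rfl⟩ := h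
  exact ⟨rfl, by grind, rfl⟩

lemma injOn_omitThd_zeroSumTriples :
    Set.InjOn (fun p : G × G × G => (p.1, p.2.1)) (zeroSumTriples G) := by
  rintro ⟨i, j, l⟩ hp ⟨i', j', l'⟩ hp' h
  simp only [mem_coe, mem_zeroSumTriples, Prod.mk.injEq] at hp hp' h ⊢
  obtain ⟨rfl, rfl⟩ := h
  exact ⟨rfl, rfl, by grind⟩

end ZeroSumTriples

lemma card_le_natCard_of_injOn {ι κ : Type*} [Finite κ] {s : Finset ι} {P : κ → Prop}
    (π : ι → κ) (hπ : ∀ p ∈ s, P (π p)) (hinj : Set.InjOn π s) :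
    #s ≤ Nat.card {q // P q} := by
  rw [← Set.ncard_coe_finset]
  exact Set.ncard_le_ncard_of_injOn π hπ hinj (Set.toFinite _)

theorem sq_card_le_card_lines {G F : Type*} [AddCommGroup G] [Fintype G] [DecidableEq G]
    [AddZeroClass F] (x₁ x₂ x₃ : G × G × G → F)
    (hx : ∀ p ∈ zeroSumTriples G, x₁ p + x₂ p + x₃ p ≠ 0) :
    Fintype.card G ^ 2 ≤ Nat.card {q : G × G // ∃ s, x₁ (s, q.1, q.2) ≠ 0}
      + Nat.card {q : G × G // ∃ s, x₂ (q.1, s, q.2) ≠ 0}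
      + Nat.card {q : G × G // ∃ s, x₃ (q.1, q.2, s) ≠ 0} := by
  classical
  set D := zeroSumTriples G
  have hcover : D ⊆ {p ∈ D | x₁ p ≠ 0} ∪ {p ∈ D | x₂ p ≠ 0} ∪ {p ∈ D | x₃ p ≠ 0} := by
    intro p hp
    have := hx p hp
    contrapose! this
    simp_all
  have h₁ : #{p ∈ D | x₁ p ≠ 0} ≤ Nat.card {q : G × G // ∃ s, x₁ (s, q.1, q.2) ≠ 0} :=
    card_le_natCard_of_injOn _ (fun p hp => ⟨p.1, (mem_filter.1 hp).2⟩)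
      (injOn_omitFst_zeroSumTriples.mono (filter_subset _ _))
  have h₂ : #{p ∈ D | x₂ p ≠ 0} ≤ Nat.card {q : G × G // ∃ s, x₂ (q.1, s, q.2) ≠ 0} :=
    card_le_natCard_of_injOn _ (fun p hp => ⟨p.2.1, (mem_filter.1 hp).2⟩)
      (injOn_omitSnd_zeroSumTriples.mono (filter_subset _ _))
  have h₃ : #{p ∈ D | x₃ p ≠ 0} ≤ Nat.card {q : G × G // ∃ s, x₃ (q.1, q.2, s) ≠ 0} :=
    card_le_natCard_of_injOn _ (fun p hp => ⟨p.2.2, (mem_filter.1 hp).2⟩)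
      (injOn_omitThd_zeroSumTriples.mono (filter_subset _ _))
  calc Fintype.card G ^ 2 = #D := card_zeroSumTriples.symm
    _ ≤ #({p ∈ D | x₁ p ≠ 0} ∪ {p ∈ D | x₂ p ≠ 0} ∪ {p ∈ D | x₃ p ≠ 0}) := card_le_card hcover
    _ ≤ #{p ∈ D | x₁ p ≠ 0} + #{p ∈ D | x₂ p ≠ 0} + #{p ∈ D | x₃ p ≠ 0} :=
      (card_union_le _ _).trans (add_le_add_left (card_union_le _ _) _)
    _ ≤ _ := by gcongr

lemma Fin.add_add_eq_zero_iff {n : ℕ} [NeZero n] {i j l : Fin n} :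
    i + j + l = 0 ↔ ((i : ℕ) + j + l) % n = 0 := by
  simp [Fin.ext_iff, Fin.val_add, Nat.mod_add_mod]

/-- any decomposition `a = a₁ + a₂ + a₃` of the diagonal word uses
at least `n²` nonzero axis-parallel lines. -/
theorem stmt_4 {F : Type*} [Field F] {n : ℕ}
    (a a₁ a₂ a₃ : Fin n × Fin n × Fin n → F)
    (hsupp : ∀ p : Fin n × Fin n × Fin n,
      a p ≠ 0 ↔ ((p.1 : ℕ) + (p.2.1 : ℕ) + (p.2.2 : ℕ)) % n = 0)
    (hsum : a = a₁ + a₂ + a₃) :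
    n ^ 2 ≤ Nat.card {q : Fin n × Fin n // ∃ s, a₁ (s, q.1, q.2) ≠ 0}
      + Nat.card {q : Fin n × Fin n // ∃ s, a₂ (q.1, s, q.2) ≠ 0}
      + Nat.card {q : Fin n × Fin n // ∃ s, a₃ (q.1, q.2, s) ≠ 0} := by
  obtain rfl | _ := eq_zero_or_neZero n
  · simp
  have hdiag : ∀ p ∈ zeroSumTriples (Fin n), a₁ p + a₂ p + a₃ p ≠ 0 := fun p hp => by
    simpa [hsum] using (hsupp p).2 (Fin.add_add_eq_zero_iff.1 (mem_zeroSumTriples.1 hp))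
  simpa using sq_card_le_card_lines a₁ a₂ a₃ hdiag

end
end

section
/- Let C be the primitive Reed–Solomon [n, n/3] code over F_q (q = 2^{2t}, n = q − 1) defined by check polynomial (x−1)(x−ω)⋯(x−ω^{n/3−1}) for ω primitive. Then the product-expansion constant satisfies ρ(C, C, C) ≤ 1/n. -/
noncomputable section

open Polynomial

private lemma aux_fin_eq_of_dvd {n : ℕ} (x x' : Fin n) (m : ℕ)
    (h : n ∣ (x : ℕ) + m) (h' : n ∣ (x' : ℕ) + m) : x = x' := by
  have h1 : ((x : ℕ) + m) ≡ ((x' : ℕ) + m) [MOD n] :=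
    (Nat.modEq_zero_iff_dvd.2 h).trans (Nat.modEq_zero_iff_dvd.2 h').symm
  have h2 := Nat.ModEq.add_right_cancel' m h1
  have h3 : (x : ℕ) % n = (x' : ℕ) % n := h2
  exact Fin.val_injective (by rwa [Nat.mod_eq_of_lt x.2, Nat.mod_eq_of_lt x'.2] at h3)

private lemma aux_key_id {F : Type*} [Field F] (n : ℕ) (A : F) (hA : A ≠ 0) (hAn : A ^ n = 1) :
    (X - C A) * wordPoly (fun j : Fin n => (A⁻¹) ^ (j : ℕ)) = C A * (X ^ n - 1) := by
  have hw : wordPoly (fun j : Fin n => (A⁻¹) ^ (j : ℕ))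
      = ∑ j ∈ Finset.range n, C ((A⁻¹) ^ j) * X ^ j :=
    Fin.sum_univ_eq_sum_range (fun j => C ((A⁻¹) ^ j) * X ^ j) n
  have hstep : ∀ j : ℕ, (X - C A) * (C ((A⁻¹) ^ j) * X ^ j)
      = (C (A * (A⁻¹) ^ (j + 1)) * X ^ (j + 1)) - (C (A * (A⁻¹) ^ j) * X ^ j) := by
    intro j
    have hA1 : A * (A⁻¹) ^ (j + 1) = (A⁻¹) ^ j := by
      rw [pow_succ, ← mul_assoc, mul_comm A, mul_assoc, mul_inv_cancel₀ hA, mul_one]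
    rw [hA1, sub_mul]
    rw [C_mul]
    ring
  rw [hw, Finset.mul_sum]
  simp_rw [hstep]
  rw [Finset.sum_range_sub (fun j => C (A * (A⁻¹) ^ j) * X ^ j)]
  have hinvn : (A⁻¹) ^ n = 1 := by rw [inv_pow, hAn, inv_one]
  rw [hinvn]
  simp [mul_sub]

private lemma aux_line_mem {F : Type*} [Field F] {n k : ℕ} (ω : Fˣ)
    (hωn : ((ω : F)) ^ n = 1)
    (T : Finset ℕ) (μ : ℕ → F) (e : ℕ → ℕ) (he : ∀ d ∈ T, e d < k) :
    (fun s : Fin n => ∑ d ∈ T, μ d * (((ω : F)⁻¹) ^ (e d)) ^ (s : ℕ))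
      ∈ cyclicCode n (rsCheck k (ω : F)) := by
  have hW : wordPoly (fun s : Fin n => ∑ d ∈ T, μ d * (((ω : F)⁻¹) ^ (e d)) ^ (s : ℕ))
      = ∑ d ∈ T, C (μ d) * wordPoly (fun s : Fin n => (((ω : F)⁻¹) ^ (e d)) ^ (s : ℕ)) := by
    unfold wordPoly
    calc ∑ s : Fin n, C (∑ d ∈ T, μ d * (((ω : F)⁻¹) ^ (e d)) ^ (s : ℕ)) * X ^ (s : ℕ)
        = ∑ s : Fin n, ∑ d ∈ T, C (μ d) * (C ((((ω : F)⁻¹) ^ (e d)) ^ (s : ℕ)) * X ^ (s : ℕ)) := by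
          refine Finset.sum_congr rfl fun s _ => ?_
          rw [map_sum, Finset.sum_mul]
          refine Finset.sum_congr rfl fun d _ => ?_
          rw [C_mul]; ring
      _ = ∑ d ∈ T, ∑ s : Fin n, C (μ d) * (C ((((ω : F)⁻¹) ^ (e d)) ^ (s : ℕ)) * X ^ (s : ℕ)) :=
          Finset.sum_comm
      _ = ∑ d ∈ T, C (μ d) * ∑ s : Fin n, C ((((ω : F)⁻¹) ^ (e d)) ^ (s : ℕ)) * X ^ (s : ℕ) := by
          refine Finset.sum_congr rfl fun d _ => ?_
          rw [Finset.mul_sum]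
  show (X ^ n - 1) ∣ rsCheck k (ω : F) * _
  rw [hW, Finset.mul_sum]
  refine Finset.dvd_sum fun d hd => ?_
  have hA : ((ω : F) ^ (e d)) ≠ 0 := pow_ne_zero _ (Units.ne_zero ω)
  have hAn : ((ω : F) ^ (e d)) ^ n = 1 := by
    rw [← pow_mul, mul_comm, pow_mul, hωn, one_pow]
  have hkey := aux_key_id n ((ω : F) ^ (e d)) hA hAn
  simp only [← inv_pow] at hkey
  have hmem : e d ∈ Finset.range k := Finset.mem_range.2 (he d hd)
  have hdvd : (X ^ n - 1) ∣ rsCheck k (ω : F)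
      * wordPoly (fun s : Fin n => (((ω : F)⁻¹) ^ (e d)) ^ (s : ℕ)) := by
    rw [rsCheck, ← Finset.mul_prod_erase (Finset.range k) (fun i => X - C ((ω : F) ^ i)) hmem,
      mul_comm (X - C ((ω : F) ^ (e d))), mul_assoc, hkey]
    exact ((dvd_mul_left _ _).mul_left _)
  rw [mul_left_comm]
  exact hdvd.mul_left _

private lemma aux_inj {F : Type*} [Field F] {n : ℕ}
    (sol : Fin n → Fin n → Fin n)
    (hsol : ∀ u v : Fin n, n ∣ ((sol u v : ℕ) + (u : ℕ) + (v : ℕ)))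
    (cw : (Fin 3 → Fin n) → F)
    (hcw : ∀ y : Fin 3 → Fin n, cw (Function.update y 0 (sol (y 1) (y 2))) ≠ 0)
    (b : Fin 3 → ((Fin 3 → Fin n) → F))
    (hb : ∀ p, cw p = b 0 p + b 1 p + b 2 p) :
    n ^ 3 ≤ ∑ i : Fin 3,
      Nat.card {q : Fin 3 → Fin n // lineRestrict (n := fun _ : Fin 3 => n) (b i) i q ≠ 0} := by
  classical
  set pt : (Fin 3 → Fin n) → (Fin 3 → Fin n) := fun y => Function.update y 0 (sol (y 1) (y 2))
    with hptdef
  have hpt0 : ∀ y, pt y 0 = sol (y 1) (y 2) := fun y => Function.update_self _ _ _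
  have hpt1 : ∀ y, pt y 1 = y 1 := fun y => Function.update_of_ne (by decide) _ _
  have hpt2 : ∀ y, pt y 2 = y 2 := fun y => Function.update_of_ne (by decide) _ _
  -- properties used in the definition of the injection
  have key : ∀ y : Fin 3 → Fin n, lineRestrict (n := fun _ : Fin 3 => n) (b 0) 0 y = 0 →
      b 1 (pt y) ≠ 0 ∨ b 2 (pt y) ≠ 0 := by
    intro y h0
    have hb0 : b 0 (pt y) = 0 := by
      have := congrFun h0 (sol (y 1) (y 2))
      simpa [lineRestrict, hptdef] using this
    have hcwy : cw (pt y) ≠ 0 := hcw y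
    rw [hb (pt y), hb0, zero_add] at hcwy
    by_cases h1 : b 1 (pt y) = 0
    · right; intro h2; rw [h1, h2, add_zero] at hcwy; exact hcwy rfl
    · left; exact h1
  have line_ne : ∀ (i : Fin 3) (p : Fin 3 → Fin n) (v : Fin n), b i p ≠ 0 →
      lineRestrict (n := fun _ : Fin 3 => n) (b i) i (Function.update p i v) ≠ 0 := by
    intro i p v hbi heq
    apply hbi
    have := congrFun heq (p i)
    simpa [lineRestrict, Function.update_idem, Function.update_eq_self] using this
  -- the injection
  set Φ : (Fin 3 → Fin n) →
      (Σ i : Fin 3, {q : Fin 3 → Fin n // lineRestrict (n := fun _ : Fin 3 => n) (b i) i q ≠ 0}) :=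
    fun y =>
      if h0 : lineRestrict (n := fun _ : Fin 3 => n) (b 0) 0 y = 0 then
        (if h1 : b 1 (pt y) = 0 then
          ⟨2, Function.update (pt y) 2 (y 0), line_ne 2 (pt y) (y 0) ((key y h0).resolve_left
            (fun h => h h1))⟩
        else
          ⟨1, Function.update (pt y) 1 (y 0), line_ne 1 (pt y) (y 0) h1⟩)
      else ⟨0, y, h0⟩
    with hΦdef
  -- values of the produced points
  have q1_vals : ∀ y : Fin 3 → Fin n,
      (Function.update (pt y) 1 (y 0)) 0 = sol (y 1) (y 2) ∧
      (Function.update (pt y) 1 (y 0)) 1 = y 0 ∧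
      (Function.update (pt y) 1 (y 0)) 2 = y 2 := by
    intro y
    refine ⟨?_, Function.update_self _ _ _, ?_⟩
    · rw [Function.update_of_ne (by decide)]; exact hpt0 y
    · rw [Function.update_of_ne (by decide)]; exact hpt2 y
  have q2_vals : ∀ y : Fin 3 → Fin n,
      (Function.update (pt y) 2 (y 0)) 0 = sol (y 1) (y 2) ∧
      (Function.update (pt y) 2 (y 0)) 1 = y 1 ∧
      (Function.update (pt y) 2 (y 0)) 2 = y 0 := by
    intro y
    refine ⟨?_, ?_, Function.update_self _ _ _⟩
    · rw [Function.update_of_ne (by decide)]; exact hpt0 y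
    · rw [Function.update_of_ne (by decide)]; exact hpt1 y
  have hΦinj : Function.Injective Φ := by
    intro y y' h
    by_cases h0 : lineRestrict (n := fun _ : Fin 3 => n) (b 0) 0 y = 0 <;>
      by_cases h0' : lineRestrict (n := fun _ : Fin 3 => n) (b 0) 0 y' = 0
    · rw [hΦdef] at h
      simp only [dif_pos h0, dif_pos h0'] at h
      by_cases h1 : b 1 (pt y) = 0 <;> by_cases h1' : b 1 (pt y') = 0
      · simp only [dif_pos h1, dif_pos h1'] at h
        injection h with hfst hsnd
        have hq : Function.update (pt y) 2 (y 0) = Function.update (pt y') 2 (y' 0) :=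
          congrArg Subtype.val hsnd
        obtain ⟨e0, e1, e2⟩ := q2_vals y
        obtain ⟨e0', e1', e2'⟩ := q2_vals y'
        have c0 : sol (y 1) (y 2) = sol (y' 1) (y' 2) := by rw [← e0, ← e0', hq]
        have c1 : y 1 = y' 1 := by rw [← e1, ← e1', hq]
        have c2 : y 0 = y' 0 := by rw [← e2, ← e2', hq]
        have d1 : n ∣ (y 2 : ℕ) + ((sol (y 1) (y 2) : ℕ) + (y 1 : ℕ)) := by
          have hh := hsol (y 1) (y 2)
          rwa [show ((sol (y 1) (y 2) : ℕ) + (y 1 : ℕ) + (y 2 : ℕ))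
            = (y 2 : ℕ) + ((sol (y 1) (y 2) : ℕ) + (y 1 : ℕ)) by omega] at hh
        have d2 : n ∣ (y' 2 : ℕ) + ((sol (y 1) (y 2) : ℕ) + (y 1 : ℕ)) := by
          have hh := hsol (y' 1) (y' 2)
          rw [← c0, ← c1] at hh
          rwa [show ((sol (y 1) (y 2) : ℕ) + (y 1 : ℕ) + (y' 2 : ℕ))
            = (y' 2 : ℕ) + ((sol (y 1) (y 2) : ℕ) + (y 1 : ℕ)) by omega] at hh
        have c3 : y 2 = y' 2 := aux_fin_eq_of_dvd _ _ _ d1 d2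
        funext j; fin_cases j
        · exact c2
        · exact c1
        · exact c3
      · simp only [dif_pos h1, dif_neg h1'] at h
        injection h with hfst _
        exact absurd hfst (by decide)
      · simp only [dif_neg h1, dif_pos h1'] at h
        injection h with hfst _
        exact absurd hfst (by decide)
      · simp only [dif_neg h1, dif_neg h1'] at h
        injection h with hfst hsnd
        have hq : Function.update (pt y) 1 (y 0) = Function.update (pt y') 1 (y' 0) :=
          congrArg Subtype.val hsnd
        obtain ⟨e0, e1, e2⟩ := q1_vals y
        obtain ⟨e0', e1', e2'⟩ := q1_vals y'
        have c0 : sol (y 1) (y 2) = sol (y' 1) (y' 2) := by rw [← e0, ← e0', hq]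
        have c1 : y 0 = y' 0 := by rw [← e1, ← e1', hq]
        have c2 : y 2 = y' 2 := by rw [← e2, ← e2', hq]
        have d1 : n ∣ (y 1 : ℕ) + ((sol (y 1) (y 2) : ℕ) + (y 2 : ℕ)) := by
          have hh := hsol (y 1) (y 2)
          rwa [show ((sol (y 1) (y 2) : ℕ) + (y 1 : ℕ) + (y 2 : ℕ))
            = (y 1 : ℕ) + ((sol (y 1) (y 2) : ℕ) + (y 2 : ℕ)) by omega] at hh
        have d2 : n ∣ (y' 1 : ℕ) + ((sol (y 1) (y 2) : ℕ) + (y 2 : ℕ)) := by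
          have hh := hsol (y' 1) (y' 2)
          rw [← c0, ← c2] at hh
          rwa [show ((sol (y 1) (y 2) : ℕ) + (y' 1 : ℕ) + (y 2 : ℕ))
            = (y' 1 : ℕ) + ((sol (y 1) (y 2) : ℕ) + (y 2 : ℕ)) by omega] at hh
        have c3 : y 1 = y' 1 := aux_fin_eq_of_dvd _ _ _ d1 d2
        funext j; fin_cases j
        · exact c1
        · exact c3
        · exact c2
    · rw [hΦdef] at h
      simp only [dif_pos h0, dif_neg h0'] at h
      by_cases h1 : b 1 (pt y) = 0
      · simp only [dif_pos h1] at h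
        injection h with hfst _
        exact absurd hfst (by decide)
      · simp only [dif_neg h1] at h
        injection h with hfst _
        exact absurd hfst (by decide)
    · rw [hΦdef] at h
      simp only [dif_neg h0, dif_pos h0'] at h
      by_cases h1 : b 1 (pt y') = 0
      · simp only [dif_pos h1] at h
        injection h with hfst _
        exact absurd hfst (by decide)
      · simp only [dif_neg h1] at h
        injection h with hfst _
        exact absurd hfst (by decide)
    · rw [hΦdef] at h
      simp only [dif_neg h0, dif_neg h0'] at h
      injection h with _ hsnd
      exact congrArg Subtype.val hsnd
  -- conclude by cardinality
  have h1 := Nat.card_le_card_of_injective Φ hΦinj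
  rw [Nat.card_eq_fintype_card, Fintype.card_fun, Fintype.card_fin, Fintype.card_fin] at h1
  rw [Nat.card_eq_fintype_card, Fintype.card_sigma] at h1
  simpa [Nat.card_eq_fintype_card] using h1

/-- `ρ(C, C, C) ≤ 1/n` for the primitive Reed–Solomon `[n, n/3]` code. -/
theorem stmt_5 {F : Type*} [Field F] [Fintype F] (t n k : ℕ) (ht : 1 ≤ t)
    (hcard : Fintype.card F = 2 ^ (2 * t)) (hn : n = Fintype.card F - 1) (hk : n = 3 * k)
    (ω : Fˣ) (hω : ∀ u : Fˣ, u ∈ Subgroup.zpowers ω) :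
    prodExpConst (n := fun _ : Fin 3 => n) (fun _ => cyclicCode n (rsCheck k (ω : F))) ≤
      1 / (n : ℝ) := by
  classical
  have hq4 : 4 ≤ Fintype.card F := by
    rw [hcard]
    calc (4:ℕ) = 2 ^ 2 := by norm_num
    _ ≤ 2 ^ (2*t) := Nat.pow_le_pow_right (by norm_num) (by omega)
  have hn0 : 0 < n := by omega
  have hk0 : 0 < k := by omega
  have hcardU : Fintype.card Fˣ = n := by rw [Fintype.card_units]; omega
  have hord : orderOf ω = n := by
    rw [orderOf_eq_card_of_forall_mem_zpowers hω, Nat.card_eq_fintype_card, hcardU]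
  have hωFn : ((ω : F)) ^ n = 1 := by
    rw [← Units.val_pow_eq_pow_val, ← hord, pow_orderOf_eq_one, Units.val_one]
  set U : F := ((ω : F))⁻¹ with hU
  have hUn : U ^ n = 1 := by rw [hU, inv_pow, hωFn, inv_one]
  have hU0 : U ≠ 0 := by rw [hU]; exact inv_ne_zero (Units.ne_zero ω)
  have hUdvd : ∀ s : ℕ, U ^ s = 1 ↔ n ∣ s := by
    intro s
    have h1 : U ^ s = ((ω⁻¹ ^ s : Fˣ) : F) := by
      rw [Units.val_pow_eq_pow_val, hU]
      norm_num
    rw [h1, Units.val_eq_one, ← orderOf_dvd_iff_pow_eq_one, orderOf_inv, hord]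
  have hnF : (n : F) ≠ 0 := by
    have h0 : ((Fintype.card F : ℕ) : F) = 0 := FiniteField.cast_card_eq_zero F
    have h1 : (n : F) = -1 := by
      rw [hn, Nat.cast_sub (by omega), h0, Nat.cast_one, zero_sub]
    rw [h1]; exact neg_ne_zero.2 one_ne_zero
  have hgeom : ∀ z : F, z ^ n = 1 →
      ∑ d ∈ Finset.range n, z ^ d = if z = 1 then (n : F) else 0 := by
    intro z hz
    by_cases h1 : z = 1
    · simp [h1]
    · rw [if_neg h1, geom_sum_eq h1, hz, sub_self, zero_div]
  -- the plane solver
  have hsol_lt : ∀ u v : Fin n, (n - ((u:ℕ) + (v:ℕ)) % n) % n < n := fun _ _ => Nat.mod_lt _ hn0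
  set sol : Fin n → Fin n → Fin n := fun u v => ⟨(n - ((u:ℕ)+(v:ℕ)) % n) % n, hsol_lt u v⟩
    with hsoldef
  have hsol_dvd : ∀ u v : Fin n, n ∣ ((sol u v : ℕ) + (u:ℕ) + (v:ℕ)) := by
    intro u v
    have hm : ((u:ℕ)+(v:ℕ)) % n < n := Nat.mod_lt _ hn0
    have hmle : ((u:ℕ)+(v:ℕ)) % n ≤ (u:ℕ)+(v:ℕ) := Nat.mod_le _ _
    by_cases hm0 : ((u:ℕ)+(v:ℕ)) % n = 0
    · have h1 : (sol u v : ℕ) = 0 := by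
        simp only [hsoldef, hm0, Nat.sub_zero, Nat.mod_self]
      rw [add_assoc, h1, zero_add]
      exact Nat.dvd_of_mod_eq_zero hm0
    · have h1 : (sol u v : ℕ) = n - ((u:ℕ)+(v:ℕ)) % n := by
        simp only [hsoldef]
        exact Nat.mod_eq_of_lt (by omega)
      have h2 : n ∣ ((u:ℕ)+(v:ℕ)) - ((u:ℕ)+(v:ℕ)) % n := Nat.dvd_sub_mod _
      rw [add_assoc, h1]
      rw [show n - ((u:ℕ)+(v:ℕ)) % n + ((u:ℕ)+(v:ℕ))
          = n + (((u:ℕ)+(v:ℕ)) - ((u:ℕ)+(v:ℕ)) % n) by omega]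
      exact Nat.dvd_add (dvd_refl n) h2
  -- the witness codeword and its explicit decomposition
  set cw : (Fin 3 → Fin n) → F := fun y =>
    if n ∣ ((y 0 : ℕ) + (y 1 : ℕ) + (y 2 : ℕ)) then
      (n : F) * U ^ (2*k*(y 1 : ℕ) + k*(y 2 : ℕ)) else 0 with hcwdef
  set aw : Fin 3 → ((Fin 3 → Fin n) → F) := fun i y =>
    ∑ d ∈ Finset.Ico ((i:ℕ)*k) ((i:ℕ)*k + k),
      U ^ (d*(y 0 : ℕ) + (d+2*k)*(y 1 : ℕ) + (d+k)*(y 2 : ℕ)) with hawdef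
  have hfin0 : ((0 : Fin 3) : ℕ) = 0 := rfl
  have hfin1 : ((1 : Fin 3) : ℕ) = 1 := rfl
  have hfin2 : ((2 : Fin 3) : ℕ) = 2 := rfl
  have h_decomp : ∀ y, aw 0 y + aw 1 y + aw 2 y = cw y := by
    intro y
    have e1 : Finset.Ico (((0 : Fin 3) : ℕ)*k) (((0 : Fin 3) : ℕ)*k + k) = Finset.Ico 0 k := by
      rw [hfin0]; norm_num
    have e2 : Finset.Ico (((1 : Fin 3) : ℕ)*k) (((1 : Fin 3) : ℕ)*k + k)
        = Finset.Ico k (2*k) := by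
      rw [hfin1]; congr 1 <;> ring
    have e3 : Finset.Ico (((2 : Fin 3) : ℕ)*k) (((2 : Fin 3) : ℕ)*k + k)
        = Finset.Ico (2*k) (3*k) := by
      rw [hfin2]; congr 1; ring
    have hcomb : aw 0 y + aw 1 y + aw 2 y
        = ∑ d ∈ Finset.range n, U ^ (d*(y 0 : ℕ) + (d+2*k)*(y 1 : ℕ) + (d+k)*(y 2 : ℕ)) := by
      simp only [hawdef]
      rw [e1, e2, e3,
        Finset.sum_Ico_consecutive _ (Nat.zero_le k) (by omega),
        Finset.sum_Ico_consecutive _ (Nat.zero_le (2*k)) (by omega),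
        show 3*k = n from hk.symm, ← Finset.range_eq_Ico]
    rw [hcomb]
    have hexp : ∀ d : ℕ, d*(y 0:ℕ) + (d+2*k)*(y 1:ℕ) + (d+k)*(y 2:ℕ)
        = ((y 0:ℕ) + (y 1:ℕ) + (y 2:ℕ))*d + (2*k*(y 1:ℕ) + k*(y 2:ℕ)) := fun d => by ring
    simp_rw [hexp, pow_add, pow_mul]
    rw [← Finset.sum_mul]
    have hz : (U ^ ((y 0:ℕ) + (y 1:ℕ) + (y 2:ℕ))) ^ n = 1 := by
      rw [← pow_mul, mul_comm, pow_mul, hUn, one_pow]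
    rw [hgeom _ hz]
    simp only [hcwdef]
    by_cases hdv : n ∣ ((y 0:ℕ) + (y 1:ℕ) + (y 2:ℕ))
    · rw [if_pos ((hUdvd _).2 hdv), if_pos hdv]
      congr 1
      simp only [← pow_mul, ← pow_add]
    · rw [if_neg (fun h => hdv ((hUdvd _).1 h)), if_neg hdv, zero_mul]
  -- each piece lies in the corresponding axis code
  have h_axis : ∀ i : Fin 3, aw i ∈ axisCode (n := fun _ : Fin 3 => n)
      (fun _ => cyclicCode n (rsCheck k (ω : F))) i := by
    intro i y
    fin_cases i
    · -- direction 0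
      have hline : lineRestrict (n := fun _ : Fin 3 => n) (aw 0) 0 y = fun s : Fin n =>
          ∑ d ∈ Finset.Ico 0 k,
            (U ^ ((d+2*k)*(y 1:ℕ) + (d+k)*(y 2:ℕ))) * ((U ^ d) ^ (s:ℕ)) := by
        funext s
        simp only [lineRestrict, hawdef]
        refine Finset.sum_congr (by rw [hfin0]; norm_num) fun d _ => ?_
        rw [show (Function.update y (0 : Fin 3) s) 0 = s from Function.update_self _ _ _,
          show (Function.update y (0 : Fin 3) s) 1 = y 1 from Function.update_of_ne (by decide) _ _,
          show (Function.update y (0 : Fin 3) s) 2 = y 2 from Function.update_of_ne (by decide) _ _,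
          ← pow_mul, ← pow_add]
        congr 1; ring
      rw [show ((⟨0, by norm_num⟩ : Fin 3)) = (0 : Fin 3) from rfl]
      rw [hline, hU]
      exact aux_line_mem ω hωFn (Finset.Ico 0 k)
        (fun d => ((ω : F))⁻¹ ^ ((d+2*k)*(y 1:ℕ) + (d+k)*(y 2:ℕ))) (fun d => d)
        (fun d hd => (Finset.mem_Ico.1 hd).2)
    · -- direction 1
      have hline : lineRestrict (n := fun _ : Fin 3 => n) (aw 1) 1 y = fun s : Fin n =>
          ∑ d ∈ Finset.Ico k (k + k),
            (U ^ (d*(y 0:ℕ) + (d+k)*(y 2:ℕ))) * ((U ^ (d - k)) ^ (s:ℕ)) := by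
        funext s
        simp only [lineRestrict, hawdef]
        refine Finset.sum_congr (by rw [hfin1]; congr 1 <;> ring) fun d hd => ?_
        have hdk : k ≤ d := (Finset.mem_Ico.1 hd).1
        rw [show (Function.update y (1 : Fin 3) s) 0 = y 0 from Function.update_of_ne (by decide) _ _,
          show (Function.update y (1 : Fin 3) s) 1 = s from Function.update_self _ _ _,
          show (Function.update y (1 : Fin 3) s) 2 = y 2 from Function.update_of_ne (by decide) _ _]
        rw [show (U ^ (d - k)) ^ (s:ℕ) = (U ^ (d + 2*k)) ^ (s:ℕ) by
          rw [show d + 2*k = (d - k) + n by omega, pow_add, hUn, mul_one]]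
        rw [← pow_mul, ← pow_add]
        congr 1; ring
      rw [show ((⟨1, by norm_num⟩ : Fin 3)) = (1 : Fin 3) from rfl]
      rw [hline, hU]
      exact aux_line_mem ω hωFn (Finset.Ico k (k + k))
        (fun d => ((ω : F))⁻¹ ^ (d*(y 0:ℕ) + (d+k)*(y 2:ℕ))) (fun d => d - k)
        (fun d hd => by have h := Finset.mem_Ico.1 hd; show d - k < k; omega)
    · -- direction 2
      have hline : lineRestrict (n := fun _ : Fin 3 => n) (aw 2) 2 y = fun s : Fin n =>
          ∑ d ∈ Finset.Ico (2*k) (2*k + k),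
            (U ^ (d*(y 0:ℕ) + (d+2*k)*(y 1:ℕ))) * ((U ^ (d - 2*k)) ^ (s:ℕ)) := by
        funext s
        simp only [lineRestrict, hawdef]
        refine Finset.sum_congr (by rw [hfin2]) fun d hd => ?_
        have hdk : 2*k ≤ d := (Finset.mem_Ico.1 hd).1
        rw [show (Function.update y (2 : Fin 3) s) 0 = y 0 from Function.update_of_ne (by decide) _ _,
          show (Function.update y (2 : Fin 3) s) 1 = y 1 from Function.update_of_ne (by decide) _ _,
          show (Function.update y (2 : Fin 3) s) 2 = s from Function.update_self _ _ _]
        rw [show (U ^ (d - 2*k)) ^ (s:ℕ) = (U ^ (d + k)) ^ (s:ℕ) by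
          rw [show d + k = (d - 2*k) + n by omega, pow_add, hUn, mul_one]]
        rw [← pow_mul, ← pow_add]
      rw [show ((⟨2, by norm_num⟩ : Fin 3)) = (2 : Fin 3) from rfl]
      rw [hline, hU]
      exact aux_line_mem ω hωFn (Finset.Ico (2*k) (2*k + k))
        (fun d => ((ω : F))⁻¹ ^ (d*(y 0:ℕ) + (d+2*k)*(y 1:ℕ))) (fun d => d - 2*k)
        (fun d hd => by have h := Finset.mem_Ico.1 hd; show d - 2*k < k; omega)
  -- the witness lies in the box code
  have h_box : cw ∈ boxCode (n := fun _ : Fin 3 => n)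
      (fun _ => cyclicCode n (rsCheck k (ω : F))) := by
    intro z hz
    have hzline : ∀ (i : Fin 3) (yy : Fin 3 → Fin n),
        lineRestrict (n := fun _ : Fin 3 => n) z i yy ∈
          dualCode (cyclicCode n (rsCheck k (ω : F))) := fun i yy => (Set.mem_iInter.1 hz i) yy
    have key : ∀ i : Fin 3, ∑ p : Fin 3 → Fin n, aw i p * z p = 0 := by
      intro i
      rw [← Equiv.sum_comp (Equiv.piSplitAt i (fun _ : Fin 3 => Fin n)).symm
        (fun p => aw i p * z p), Fintype.sum_prod_type, Finset.sum_comm]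
      refine Finset.sum_eq_zero fun r _ => ?_
      set Y : Fin 3 → Fin n := (Equiv.piSplitAt i (fun _ : Fin 3 => Fin n)).symm (⟨0, hn0⟩, r)
        with hYdef
      have hupd : ∀ s : Fin n, (Equiv.piSplitAt i (fun _ : Fin 3 => Fin n)).symm (s, r)
          = Function.update Y i s := by
        intro s; funext j
        by_cases hj : j = i
        · subst hj
          rw [Equiv.piSplitAt_symm_apply, Function.update_self]
          simp
        · rw [Equiv.piSplitAt_symm_apply, Function.update_of_ne hj, hYdef,
            Equiv.piSplitAt_symm_apply]
          simp [hj]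
      have hterm : ∀ s : Fin n,
          aw i ((Equiv.piSplitAt i (fun _ : Fin 3 => Fin n)).symm (s, r))
            * z ((Equiv.piSplitAt i (fun _ : Fin 3 => Fin n)).symm (s, r))
          = lineRestrict (n := fun _ : Fin 3 => n) z i Y s
            * lineRestrict (n := fun _ : Fin 3 => n) (aw i) i Y s := by
        intro s
        rw [hupd s]
        simp only [lineRestrict]
        ring
      rw [Finset.sum_congr rfl fun s _ => hterm s]
      exact hzline i Y (lineRestrict (n := fun _ : Fin 3 => n) (aw i) i Y) (h_axis i Y)
    have hsplit : ∀ p : Fin 3 → Fin n, cw p * z p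
        = aw 0 p * z p + (aw 1 p * z p + aw 2 p * z p) := by
      intro p; rw [← h_decomp p]; ring
    rw [Finset.sum_congr rfl fun p _ => hsplit p, Finset.sum_add_distrib,
      Finset.sum_add_distrib, key 0, key 1, key 2]
    norm_num
  -- support of the witness
  have hval : ∀ y : Fin 3 → Fin n, cw y ≠ 0 ↔ n ∣ ((y 0:ℕ) + (y 1:ℕ) + (y 2:ℕ)) := by
    intro y
    constructor
    · intro h
      by_contra hd
      exact h (by simp only [hcwdef]; rw [if_neg hd])
    · intro hd
      simp only [hcwdef]
      rw [if_pos hd]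
      exact mul_ne_zero hnF (pow_ne_zero _ hU0)
  have h_card_supp : Nat.card {y : Fin 3 → Fin n // cw y ≠ 0} = n * n := by
    have e : {y : Fin 3 → Fin n // cw y ≠ 0} ≃ Fin n × Fin n :=
      { toFun := fun y => (y.1 1, y.1 2)
        invFun := fun bc => ⟨![sol bc.1 bc.2, bc.1, bc.2], by
          rw [hval]
          simpa using hsol_dvd bc.1 bc.2⟩
        left_inv := fun y => by
          have hy := (hval y.1).1 y.2
          have h0 : sol (y.1 1) (y.1 2) = y.1 0 := by
            refine aux_fin_eq_of_dvd _ _ ((y.1 1 : ℕ) + (y.1 2 : ℕ)) ?_ ?_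
            · have := hsol_dvd (y.1 1) (y.1 2); rwa [add_assoc] at this
            · rwa [add_assoc] at hy
          apply Subtype.ext
          funext j; fin_cases j
          · exact h0
          · rfl
          · rfl
        right_inv := fun bc => rfl }
    rw [Nat.card_congr e, Nat.card_eq_fintype_card, Fintype.card_prod, Fintype.card_fin]
  have hgrid : Fintype.card (Fin 3 → Fin n) = n ^ 3 := by
    rw [Fintype.card_fun, Fintype.card_fin, Fintype.card_fin]
  have hnR : (0:ℝ) < (n:ℝ) := by exact_mod_cast hn0
  have h_normc : normWt cw = 1 / (n : ℝ) := by
    rw [normWt, h_card_supp, hgrid]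
    push_cast
    field_simp
  -- conclusion
  refine Real.sSup_le ?_ (by positivity)
  intro ρ hρ
  obtain ⟨b, hbaxis, hcb, hineq⟩ := hρ cw h_box
  rcases le_or_gt ρ 0 with hρ0 | hρ0
  · exact hρ0.trans (by positivity)
  have hcwprop : ∀ y : Fin 3 → Fin n, cw (Function.update y 0 (sol (y 1) (y 2))) ≠ 0 := by
    intro y
    rw [hval]
    rw [show (Function.update y (0 : Fin 3) (sol (y 1) (y 2))) 0 = sol (y 1) (y 2) from
        Function.update_self _ _ _,
      show (Function.update y (0 : Fin 3) (sol (y 1) (y 2))) 1 = y 1 from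
        Function.update_of_ne (by decide) _ _,
      show (Function.update y (0 : Fin 3) (sol (y 1) (y 2))) 2 = y 2 from
        Function.update_of_ne (by decide) _ _]
    exact hsol_dvd _ _
  have hbp : ∀ p, cw p = b 0 p + b 1 p + b 2 p := by
    intro p
    rw [hcb]
    simp [Fin.sum_univ_three]
  have hcount := aux_inj sol hsol_dvd cw hcwprop b hbp
  have h_main : (1:ℝ) ≤ ∑ i : Fin 3, lineWt (n := fun _ : Fin 3 => n) (b i) i := by
    have hcast : ((n:ℝ))^3 ≤ ∑ i : Fin 3, (Nat.card {q : Fin 3 → Fin n //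
        lineRestrict (n := fun _ : Fin 3 => n) (b i) i q ≠ 0} : ℝ) := by
      exact_mod_cast hcount
    have hW : ∑ i : Fin 3, lineWt (n := fun _ : Fin 3 => n) (b i) i
        = (∑ i : Fin 3, (Nat.card {q : Fin 3 → Fin n //
            lineRestrict (n := fun _ : Fin 3 => n) (b i) i q ≠ 0} : ℝ)) / ((n:ℝ)^3) := by
      rw [Finset.sum_div]
      refine Finset.sum_congr rfl fun i _ => ?_
      rw [lineWt, hgrid]
      push_cast
      ring
    rw [hW, le_div_iff₀ (by positivity), one_mul]
    exact hcast
  have hfinal : ρ ≤ normWt cw := by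
    calc ρ = ρ * 1 := (mul_one ρ).symm
      _ ≤ ρ * ∑ i : Fin 3, lineWt (n := fun _ : Fin 3 => n) (b i) i :=
          mul_le_mul_of_nonneg_left h_main hρ0.le
      _ ≤ normWt cw := hineq
  rwa [h_normc] at hfinal

end
end

section
/- Let C ⊆ F_q^n be a linear code and 1 ≤ k₁ < k₂ < m. Then the robustness constants of axis-parallel flat tests for C^{⊗m} satisfy ρ_r(T_m^{k₁}, C^{⊗m}) ≥ ρ_r(T_m^{k₂}, C^{⊗m}) · ρ_r(T_{k₂}^{k₁}, C^{⊗k₂}). -/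
noncomputable section

open Polynomial

/-!
Restricting a word to a `k₂`-flat and then to a `k₁`-flat inside it is restricting it to a
`k₁`-flat of `[n]^m`, and every `k₁`-flat arises in equally many ways (permutations of the
axes act transitively), so the `k₁`-flat test on `x` is the average over `k₂`-flats `π` of the
`k₁`-flat test on `x|_π`. Each of these is at least `ρ_r(T_{k₂}^{k₁}) · δ(x|_π, C^{⊗k₂})`, and the
average of those distances is the `k₂`-flat test, which is at least `ρ_r(T_m^{k₂}) · δ(x, C^{⊗m})`.
-/

open Finset

theorem normWt_nonneg {ι F : Type*} [Fintype ι] [Zero F] (x : ι → F) : 0 ≤ normWt x := by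
  unfold normWt
  positivity

theorem distTo_nonneg {ι F : Type*} [Fintype ι] [AddGroup F] (x : ι → F) (S : Set (ι → F)) :
    0 ≤ distTo x S :=
  Real.sInf_nonneg fun _ ⟨_, _, hc⟩ => hc ▸ normWt_nonneg _

theorem flatTestE_nonneg {F : Type*} [Field F] {n : ℕ} (C : Set (Fin n → F)) (m k : ℕ)
    (x : (Fin m → Fin n) → F) : 0 ≤ flatTestE C m k x := by
  unfold flatTestE
  exact div_nonneg (sum_nonneg fun _ _ => sum_nonneg fun _ _ => distTo_nonneg _ _)
    (by positivity)

section Robustness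

variable {X : Type*}

-- `flatRobustConst C m k` unfolds to `robustConst (distTo · (tensorPow C m)) (flatTestE C m k)`.
def robustConst (d E : X → ℝ) : ℝ :=
  sSup {α : ℝ | ∀ x, α * d x ≤ E x}

variable {d E : X → ℝ}

theorem robustConst_nonneg (hE : ∀ x, 0 ≤ E x) : 0 ≤ robustConst d E :=
  Real.sSup_nonneg' ⟨0, fun x => by simpa using hE x, le_rfl⟩

theorem robustConst_mul_le (hd : ∀ x, 0 ≤ d x) (hE : ∀ x, 0 ≤ E x) (x : X) :
    robustConst d E * d x ≤ E x := by
  rcases (hd x).eq_or_lt with hx | hx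
  · simpa [← hx] using hE x
  · rw [← le_div_iff₀ hx]
    exact csSup_le ⟨0, fun y => by simpa using hE y⟩ fun α hα => (le_div_iff₀ hx).2 (hα x)

theorem robustConst_mul_le_robustConst {E' : X → ℝ} {b : ℝ} (hd : ∀ x, 0 ≤ d x)
    (hE : ∀ x, 0 ≤ E x) (hb : 0 ≤ b) (h : ∀ x, b * E x ≤ E' x) :
    robustConst d E * b ≤ robustConst d E' := by
  have hE' : ∀ x, 0 ≤ E' x := fun x => (mul_nonneg hb (hE x)).trans (h x)
  by_cases hd0 : ∃ x₀, 0 < d x₀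
  · obtain ⟨x₀, hpos⟩ := hd0
    refine le_csSup ⟨E' x₀ / d x₀, fun α hα => (le_div_iff₀ hpos).2 (hα x₀)⟩ fun x => ?_
    calc robustConst d E * b * d x = b * (robustConst d E * d x) := by ring
      _ ≤ b * E x := mul_le_mul_of_nonneg_left (robustConst_mul_le hd hE x) hb
      _ ≤ E' x := h x
  · -- `d` vanishes, so the defining set is all of `ℝ`, whose `sSup` is the junk value `0`.
    have hS : {α : ℝ | ∀ x, α * d x ≤ E x} = Set.univ :=
      Set.eq_univ_of_forall fun α x => by
        simpa [le_antisymm (not_lt.1 fun h => hd0 ⟨x, h⟩) (hd x)] using hE x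
    rw [robustConst, hS, Real.sSup_univ, zero_mul]
    exact robustConst_nonneg hE'

end Robustness

theorem sum_comp_mul_card_eq_of_card_fiber_eq {P Q R : Type*} [Fintype P] [Fintype Q]
    [DecidableEq Q] [CommSemiring R] (π : P → Q)
    (hπ : ∀ q q', #{p | π p = q} = #{p | π p = q'}) (f : Q → R) :
    (∑ p, f (π p)) * Fintype.card Q = Fintype.card P * ∑ q, f q := by
  rcases isEmpty_or_nonempty Q with hQ | ⟨⟨q₀⟩⟩
  · simp
  have hsum : ∑ p, f (π p) = #{p | π p = q₀} * ∑ q, f q := by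
    rw [← sum_fiberwise univ π, mul_sum]
    refine sum_congr rfl fun q _ => ?_
    rw [sum_congr rfl fun p hp => by rw [(mem_filter.1 hp).2], sum_const,
      hπ q q₀, nsmul_eq_mul]
  have hcard : Fintype.card P = #{p | π p = q₀} * Fintype.card Q := by
    rw [← card_univ, card_eq_sum_card_fiberwise (f := π) (t := univ)
      fun _ _ => mem_univ _, sum_congr rfl fun q _ => hπ q q₀, sum_const,
      smul_eq_mul, mul_comm, card_univ]
  rw [hsum, hcard]
  push_cast
  ring

theorem card_filter_trans_eq {α β γ : Type*} [Fintype α] [Fintype β] [Fintype γ]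
    [DecidableEq (α ↪ γ)] (e e' : α ↪ γ) :
    #{p : (β ↪ γ) × (α ↪ β) | p.2.trans p.1 = e} =
      #{p : (β ↪ γ) × (α ↪ β) | p.2.trans p.1 = e'} := by
  obtain ⟨σ, hσ⟩ := Equiv.Perm.exists_extending_pair e e' e.injective e'.injective
  refine card_equiv ((Equiv.embeddingCongr (Equiv.refl β) σ).prodCongr (Equiv.refl _))
    fun p => ?_
  simp only [mem_filter, mem_univ, true_and]
  constructor
  · rintro rfl
    ext a
    exact hσ a
  · intro h
    ext a
    apply σ.injective
    rw [hσ]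
    exact DFunLike.congr_fun h a

theorem sum_sum_trans_mul_card {α β γ R : Type*} [Fintype α] [Fintype β] [Fintype γ]
    [CommSemiring R] (f : (α ↪ γ) → R) :
    (∑ e₂ : β ↪ γ, ∑ e₁ : α ↪ β, f (e₁.trans e₂)) * Fintype.card (α ↪ γ)
      = Fintype.card (β ↪ γ) * Fintype.card (α ↪ β) * ∑ e, f e := by
  classical
  rw [← Fintype.sum_prod_type', ← Nat.cast_mul, ← Fintype.card_prod]
  exact sum_comp_mul_card_eq_of_card_fiber_eq (fun p : (β ↪ γ) × (α ↪ β) => p.2.trans p.1)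
    card_filter_trans_eq f

section Flats

variable {α : Type*} {m k : ℕ}

-- `flatRestrict x e y z = x (flatPoint e y z)` holds by definition.
def flatPoint (e : Fin k ↪ Fin m) (y : Fin m → α) (z : Fin k → α) : Fin m → α :=
  fun j => if h : ∃ l, e l = j then z h.choose else y j

theorem flatPoint_apply_embedding (e : Fin k ↪ Fin m) (y : Fin m → α) (z : Fin k → α)
    (l : Fin k) : flatPoint e y z (e l) = z l := by
  have h : ∃ l', e l' = e l := ⟨l, rfl⟩
  rw [flatPoint, dif_pos h, e.injective h.choose_spec]

theorem flatPoint_apply_of_notMem {e : Fin k ↪ Fin m} {j : Fin m} (hj : j ∉ Set.range e)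
    (y : Fin m → α) (z : Fin k → α) : flatPoint e y z j = y j :=
  dif_neg hj

theorem flatPoint_trans {k₁ k₂ : ℕ} (e₂ : Fin k₂ ↪ Fin m) (e₁ : Fin k₁ ↪ Fin k₂)
    (y₂ : Fin m → α) (y₁ : Fin k₂ → α) (z : Fin k₁ → α) :
    flatPoint (e₁.trans e₂) (flatPoint e₂ y₂ y₁) z = flatPoint e₂ y₂ (flatPoint e₁ y₁ z) := by
  funext j
  by_cases hj : j ∈ Set.range e₂
  · obtain ⟨l, rfl⟩ := hj
    by_cases hl : l ∈ Set.range e₁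
    · obtain ⟨t, rfl⟩ := hl
      rw [flatPoint_apply_embedding e₂, flatPoint_apply_embedding e₁]
      exact flatPoint_apply_embedding (e₁.trans e₂) _ z t
    · have hl' : e₂ l ∉ Set.range (e₁.trans e₂) := fun ⟨t, ht⟩ => hl ⟨t, e₂.injective ht⟩
      rw [flatPoint_apply_of_notMem hl', flatPoint_apply_embedding, flatPoint_apply_embedding,
        flatPoint_apply_of_notMem hl]
  · have hj' : j ∉ Set.range (e₁.trans e₂) := fun ⟨t, ht⟩ => hj ⟨e₁ t, ht⟩
    rw [flatPoint_apply_of_notMem hj', flatPoint_apply_of_notMem hj,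
      flatPoint_apply_of_notMem hj]

theorem flatPoint_involutive (e : Fin k ↪ Fin m) :
    Function.Involutive fun p : (Fin m → α) × (Fin k → α) => (flatPoint e p.1 p.2, p.1 ∘ e) := by
  rintro ⟨y, z⟩
  refine Prod.ext (funext fun j => ?_) (funext (flatPoint_apply_embedding e y z))
  by_cases hj : j ∈ Set.range e
  · obtain ⟨l, rfl⟩ := hj
    exact flatPoint_apply_embedding e _ _ l
  · show flatPoint e (flatPoint e y z) (y ∘ e) j = y j
    rw [flatPoint_apply_of_notMem hj, flatPoint_apply_of_notMem hj]

theorem sum_sum_flatPoint {M : Type*} [AddCommMonoid M] [Fintype α] (e : Fin k ↪ Fin m)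
    (G : (Fin m → α) → M) :
    ∑ y, ∑ z, G (flatPoint e y z) = Fintype.card (Fin k → α) • ∑ y, G y := by
  rw [← Fintype.sum_prod_type']
  refine (Equiv.sum_comp (flatPoint_involutive e).toPerm fun p => G p.1).trans ?_
  rw [Fintype.sum_prod_type]
  simp only [sum_const, card_univ, smul_sum]

end Flats

theorem flatRestrict_flatRestrict {F : Type*} {n m k₁ k₂ : ℕ} (x : (Fin m → Fin n) → F)
    (e₂ : Fin k₂ ↪ Fin m) (e₁ : Fin k₁ ↪ Fin k₂) (y₂ : Fin m → Fin n) (y₁ : Fin k₂ → Fin n) :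
    flatRestrict (flatRestrict x e₂ y₂) e₁ y₁ =
      flatRestrict x (e₁.trans e₂) (flatPoint e₂ y₂ y₁) :=
  funext fun z => congrArg x (flatPoint_trans e₂ e₁ y₂ y₁ z).symm

theorem flatTestE_eq_sum_flatTestE_flatRestrict {F : Type*} [Field F] {n : ℕ}
    (C : Set (Fin n → F)) {k₁ k₂ m : ℕ} (hk : k₁ ≤ k₂) (hm : k₂ ≤ m)
    (x : (Fin m → Fin n) → F) :
    flatTestE C m k₁ x = (∑ e₂ : Fin k₂ ↪ Fin m, ∑ y₂ : Fin m → Fin n,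
        flatTestE C k₂ k₁ (flatRestrict x e₂ y₂)) /
      ((Fintype.card (Fin k₂ ↪ Fin m) : ℝ) * Fintype.card (Fin m → Fin n)) := by
  rcases isEmpty_or_nonempty (Fin m → Fin n) with hY | ⟨⟨y⟩⟩
  · simp [flatTestE]
  have hcount : (∑ e₂ : Fin k₂ ↪ Fin m, ∑ y₂ : Fin m → Fin n, ∑ e₁ : Fin k₁ ↪ Fin k₂,
        ∑ y₁ : Fin k₂ → Fin n,
          distTo (flatRestrict x (e₁.trans e₂) (flatPoint e₂ y₂ y₁)) (tensorPow C k₁)) *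
        Fintype.card (Fin k₁ ↪ Fin m) =
      Fintype.card (Fin k₂ → Fin n) * (Fintype.card (Fin k₂ ↪ Fin m) *
        Fintype.card (Fin k₁ ↪ Fin k₂) *
          ∑ e, ∑ y, distTo (flatRestrict x e y) (tensorPow C k₁)) := by
    rw [← sum_sum_trans_mul_card, ← mul_assoc, mul_sum]
    congr 1
    refine sum_congr rfl fun e₂ _ => ?_
    rw [sum_comm, mul_sum]
    refine sum_congr rfl fun e₁ _ => ?_
    rw [sum_sum_flatPoint e₂ fun y => distTo (flatRestrict x (e₁.trans e₂) y) (tensorPow C k₁),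
      nsmul_eq_mul]
  have hN₁ : 0 < Fintype.card (Fin k₁ ↪ Fin k₂) := Fintype.card_pos_iff.2 ⟨Fin.castLEEmb hk⟩
  have hN₂ : 0 < Fintype.card (Fin k₂ ↪ Fin m) := Fintype.card_pos_iff.2 ⟨Fin.castLEEmb hm⟩
  have hN : 0 < Fintype.card (Fin k₁ ↪ Fin m) :=
    Fintype.card_pos_iff.2 ⟨Fin.castLEEmb (hk.trans hm)⟩
  have hK₂ : 0 < Fintype.card (Fin k₂ → Fin n) :=
    Fintype.card_pos_iff.2 ⟨fun l => y (Fin.castLE hm l)⟩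
  have hK : 0 < Fintype.card (Fin m → Fin n) := Fintype.card_pos_iff.2 ⟨y⟩
  simp only [flatTestE, flatRestrict_flatRestrict, ← sum_div]
  field_simp
  linear_combination -hcount

theorem flatRobustConst_mul_flatTestE_le {F : Type*} [Field F] {n : ℕ} (C : Set (Fin n → F))
    {k₁ k₂ m : ℕ} (hk : k₁ ≤ k₂) (hm : k₂ ≤ m) (x : (Fin m → Fin n) → F) :
    flatRobustConst C k₂ k₁ * flatTestE C m k₂ x ≤ flatTestE C m k₁ x := by
  rw [flatTestE_eq_sum_flatTestE_flatRestrict C hk hm, flatTestE, mul_div_assoc']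
  refine div_le_div_of_nonneg_right ?_ (by positivity)
  simp only [mul_sum]
  gcongr with e₂ _ y₂ _
  exact robustConst_mul_le (fun _ => distTo_nonneg _ _) (flatTestE_nonneg C k₂ k₁) _

theorem stmt_6_general {F : Type*} [Field F] {n : ℕ} (C : Submodule F (Fin n → F))
    (k₁ k₂ m : ℕ) (h2 : k₁ < k₂) (h3 : k₂ < m) :
    flatRobustConst (C : Set (Fin n → F)) m k₂ * flatRobustConst (C : Set (Fin n → F)) k₂ k₁ ≤
      flatRobustConst (C : Set (Fin n → F)) m k₁ :=
  robustConst_mul_le_robustConst (fun x => distTo_nonneg x _) (flatTestE_nonneg _ m k₂)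
    (robustConst_nonneg (flatTestE_nonneg _ k₂ k₁))
    (flatRobustConst_mul_flatTestE_le _ h2.le h3.le)

/-- robustness of test composition,
`ρ_r(T_m^{k₁}) ≥ ρ_r(T_m^{k₂}) · ρ_r(T_{k₂}^{k₁})`. -/
theorem stmt_6 {F : Type*} [Field F] [Fintype F] {n : ℕ} (C : Submodule F (Fin n → F))
    (k₁ k₂ m : ℕ) (h1 : 1 ≤ k₁) (h2 : k₁ < k₂) (h3 : k₂ < m) :
    flatRobustConst (C : Set (Fin n → F)) m k₂ * flatRobustConst (C : Set (Fin n → F)) k₂ k₁ ≤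
      flatRobustConst (C : Set (Fin n → F)) m k₁ :=
  stmt_6_general C k₁ k₂ m h2 h3

end
end
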